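/- Addition of constructed numbers is associative: for all constructor numbers x, y and z (over a fixed condition algebra C), there exists a CN number term c such that (x + y) + z →̲ c and x + (y + z) →̲ c. -/

import Mathlib

/-- A condition algebra with bracket: a commutative monoid with inversion,
two copy operations, and a bracket operation. -/
class CondAlg (C : Type*) extends CommMonoid C where
  inv : C → C
  c0 : C → C
  c1 : C → C
  brkt : C → C
  inv_inv : ∀ A : C, inv (inv A) = A
  inv_mul : ∀ A B : C, inv (A * B) = inv A * inv B
  c0_mul : ∀ A B : C, c0 (A * B) = c0 A * c0 B
  c1_mul : ∀ A B : C, c1 (A * B) = c1 A * c1 B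
  copy_cancel : ∀ A : C, c0 A * inv (c1 A) = 1
  copy_eq : ∀ A : C, c0 A * c1 A = A
  brkt_one : brkt (1 : C) = 1
  brkt_mul : ∀ A B : C, brkt A * brkt B = brkt (A * B)

/-- CN number terms over the condition algebra `C`. -/
inductive CN (C : Type*) : Type _
  | zero : C → CN C                 -- A·0
  | suc : C → CN C → CN C           -- (A suc)a
  | ann : C → C → CN C → CN C       -- (A,B ann)a
  | copy0 : CN C → CN C             -- a⁰
  | copy1 : CN C → CN C             -- a¹
  | add : CN C → CN C → CN C        -- a + b
  | sub : CN C → CN C → CN C        -- a − b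

variable {C : Type*} [CondAlg C]

open CondAlg

/-- CNSmooth equality `≃` on CN number terms. -/
inductive CNSmooth : CN C → CN C → Prop
  | refl (a : CN C) : CNSmooth a a
  | symm {a b} : CNSmooth a b → CNSmooth b a
  | trans {a b c} : CNSmooth a b → CNSmooth b c → CNSmooth a c
  -- congruence rules
  | suc_congr (A : C) {a b} : CNSmooth a b → CNSmooth (.suc A a) (.suc A b)
  | ann_congr (A B : C) {a b} : CNSmooth a b → CNSmooth (.ann A B a) (.ann A B b)
  | copy0_congr {a b} : CNSmooth a b → CNSmooth (.copy0 a) (.copy0 b)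
  | copy1_congr {a b} : CNSmooth a b → CNSmooth (.copy1 a) (.copy1 b)
  | add_congr {a a' b b'} : CNSmooth a a' → CNSmooth b b' →
      CNSmooth (.add a b) (.add a' b')
  | sub_congr {a a' b b'} : CNSmooth a a' → CNSmooth b b' →
      CNSmooth (.sub a b) (.sub a' b')
  -- exchange laws
  | exch_suc_suc (A B : C) (a : CN C) :
      CNSmooth (.suc A (.suc B a)) (.suc B (.suc A a))
  | exch_ann_suc (A₀ A₁ B : C) (a : CN C) :
      CNSmooth (.ann A₀ A₁ (.suc B a)) (.suc B (.ann A₀ A₁ a))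
  | exch_ann_ann (A₀ A₁ B₀ B₁ : C) (a : CN C) :
      CNSmooth (.ann A₀ A₁ (.ann B₀ B₁ a)) (.ann B₀ B₁ (.ann A₀ A₁ a))
  | exch_ann_ann' (A₀ A₁ B₀ B₁ : C) (a : CN C) :
      CNSmooth (.ann A₀ A₁ (.ann B₀ B₁ a)) (.ann A₀ B₁ (.ann B₀ A₁ a))
  | exch_suc_ann (A B₀ B₁ : C) (a : CN C) :
      CNSmooth (.suc A (.ann B₀ B₁ a)) (.suc B₀ (.ann A B₁ a))
  -- bracket laws
  | brkt_zero (A : C) : CNSmooth (.zero A) (.zero (brkt A))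
  | brkt_suc (A : C) (a : CN C) : CNSmooth (.suc A a) (.suc (brkt A) a)
  | brkt_ann_left (A B : C) (a : CN C) :
      CNSmooth (.ann A B a) (.ann (brkt A) B a)
  | brkt_ann_right (A B : C) (a : CN C) :
      CNSmooth (.ann A B a) (.ann A (brkt B) a)
  -- copy-distribution laws
  | copy0_zero (A : C) : CNSmooth (.copy0 (.zero A)) (.zero (c0 A))
  | copy1_zero (A : C) : CNSmooth (.copy1 (.zero A)) (.zero (c1 A))
  | copy0_suc (A : C) (a : CN C) :
      CNSmooth (.copy0 (.suc A a)) (.suc (c0 A) (.copy0 a))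
  | copy1_suc (A : C) (a : CN C) :
      CNSmooth (.copy1 (.suc A a)) (.suc (c1 A) (.copy1 a))
  | copy0_ann (A B : C) (a : CN C) :
      CNSmooth (.copy0 (.ann A B a)) (.ann (c0 A) (c0 B) (.copy0 a))
  | copy1_ann (A B : C) (a : CN C) :
      CNSmooth (.copy1 (.ann A B a)) (.ann (c1 A) (c1 B) (.copy1 a))
  -- inversion-simplification
  | inv_simp (A B : C) (a : CN C) (h : A * inv B = 1) :
      CNSmooth (.ann A B a) a

/-- Equality reduction `→̲`: the smallest reflexive, transitive, congruent
relation containing smooth equality and all instances of the addition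
program rules. -/
inductive CNEqRed : CN C → CN C → Prop
  | refl (a : CN C) : CNEqRed a a
  | trans {a b c} : CNEqRed a b → CNEqRed b c → CNEqRed a c
  -- contains smooth equality
  | of_smooth {a b} : CNSmooth a b → CNEqRed a b
  -- congruence rules
  | suc_congr (A : C) {a b} : CNEqRed a b → CNEqRed (.suc A a) (.suc A b)
  | ann_congr (A B : C) {a b} : CNEqRed a b → CNEqRed (.ann A B a) (.ann A B b)
  | copy0_congr {a b} : CNEqRed a b → CNEqRed (.copy0 a) (.copy0 b)
  | copy1_congr {a b} : CNEqRed a b → CNEqRed (.copy1 a) (.copy1 b)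
  | add_congr {a a' b b'} : CNEqRed a a' → CNEqRed b b' →
      CNEqRed (.add a b) (.add a' b')
  | sub_congr {a a' b b'} : CNEqRed a a' → CNEqRed b b' →
      CNEqRed (.sub a b) (.sub a' b')
  -- addition program rules
  | add_suc (X : C) (x y : CN C) :
      CNEqRed (.add (.suc X x) y) (.suc X (.add x y))
  | add_ann (X₀ X₁ : C) (x y : CN C) :
      CNEqRed (.add (.ann X₀ X₁ x) y) (.ann X₀ X₁ (.add x y))
  | add_zero_suc (X Y : C) (y : CN C) :
      CNEqRed (.add (.zero X) (.suc Y y)) (.suc Y (.add (.zero X) y))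
  | add_zero_ann (X Y₀ Y₁ : C) (y : CN C) :
      CNEqRed (.add (.zero X) (.ann Y₀ Y₁ y)) (.ann Y₀ Y₁ (.add (.zero X) y))
  | add_zero_zero (X Y : C) :
      CNEqRed (.add (.zero X) (.zero Y)) (.zero (CondAlg.brkt (X * Y)))

/-- Constructor numbers: CN terms built only from the constructors
`A·0`, `(A suc)a`, `(A,B ann)a`. -/
inductive IsCon : CN C → Prop
  | zero (A : C) : IsCon (.zero A)
  | suc (A : C) {a} : IsCon a → IsCon (.suc A a)
  | ann (A B : C) {a} : IsCon a → IsCon (.ann A B a)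

/-!
Adding constructor numbers stacks the constructors of `x` on top of those of `y` and multiplies
their base conditions (the `X` of the innermost `X·0`) under a bracket, so `(x + y) + z` and
`x + (y + z)` reduce to the same constructor stack with bases `⟨⟨XY⟩Z⟩` and `⟨X⟨YZ⟩⟩`.
Bracketing the base of `z` (resp. `x`) beforehand, by `A·0 ≃ ⟨A⟩·0`, turns both into
`⟨⟨XY⟩⟨Z⟩⟩ = ⟨⟨XYZ⟩⟩ = ⟨⟨X⟩⟨YZ⟩⟩`.
-/

namespace CN

def graft : CN C → CN C → CN C
  | .zero _, b => b
  | .suc A a, b => .suc A (a.graft b)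
  | .ann A B a, b => .ann A B (a.graft b)
  | _, b => b

def base : CN C → C
  | .zero A => A
  | .suc _ a => a.base
  | .ann _ _ a => a.base
  | _ => 1

end CN

namespace IsCon

variable {x : CN C}

omit [CondAlg C] in
theorem graft_graft (hx : IsCon x) (b c : CN C) :
    (x.graft b).graft c = x.graft (b.graft c) := by
  induction hx <;> simp_all only [CN.graft]

theorem base_graft (hx : IsCon x) (b : CN C) : (x.graft b).base = b.base := by
  induction hx <;> simp_all only [CN.graft, CN.base]

omit [CondAlg C] in
theorem graft {b : CN C} (hx : IsCon x) (hb : IsCon b) : IsCon (x.graft b) := by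
  induction hx with
  | zero => exact hb
  | suc A _ ih => exact .suc A ih
  | ann A B _ ih => exact .ann A B ih

end IsCon

namespace CNEqRed

instance : Trans (@CNEqRed C _) CNEqRed CNEqRed := ⟨CNEqRed.trans⟩

variable {x y : CN C}

theorem brkt_base (hx : IsCon x) : CNEqRed x (x.graft (.zero (brkt x.base))) := by
  induction hx with
  | zero A => exact of_smooth (.brkt_zero A)
  | suc A _ ih => exact suc_congr A ih
  | ann A B _ ih => exact ann_congr A B ih

theorem add_isCon (hx : IsCon x) (hy : IsCon y) :
    CNEqRed (.add x y) (x.graft (y.graft (.zero (brkt (x.base * y.base))))) := by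
  induction hx with
  | zero X =>
    induction hy with
    | zero Y => exact add_zero_zero X Y
    | suc Y _ ih => exact (add_zero_suc X Y _).trans (suc_congr Y ih)
    | ann Y₀ Y₁ _ ih => exact (add_zero_ann X Y₀ Y₁ _).trans (ann_congr Y₀ Y₁ ih)
  | suc A _ ih => exact (add_suc A _ _).trans (suc_congr A ih)
  | ann A B _ ih => exact (add_ann A B _ _).trans (ann_congr A B ih)

theorem add_isCon_brkt_left (hx : IsCon x) (hy : IsCon y) :
    CNEqRed (.add x y) (x.graft (y.graft (.zero (brkt (brkt x.base * y.base))))) := by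
  have hx' := hx.graft (.zero (brkt x.base))
  calc CNEqRed (.add x y) (.add (x.graft (.zero (brkt x.base))) y) :=
        add_congr (brkt_base hx) (refl y)
    CNEqRed _ _ := by
      simpa only [hx.graft_graft, hx.base_graft, CN.graft, CN.base] using add_isCon hx' hy

theorem add_isCon_brkt_right (hx : IsCon x) (hy : IsCon y) :
    CNEqRed (.add x y) (x.graft (y.graft (.zero (brkt (x.base * brkt y.base))))) := by
  have hy' := hy.graft (.zero (brkt y.base))
  calc CNEqRed (.add x y) (.add x (y.graft (.zero (brkt y.base)))) :=
        add_congr (refl x) (brkt_base hy)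
    CNEqRed _ _ := by
      simpa only [hy.graft_graft, hy.base_graft, CN.graft, CN.base] using add_isCon hx hy'

end CNEqRed

/-- Associativity of addition of constructed numbers. -/
theorem add_assoc_CN (x y z : CN C) (hx : IsCon x) (hy : IsCon y)
    (hz : IsCon z) :
    ∃ c : CN C, CNEqRed (.add (.add x y) z) c ∧
      CNEqRed (.add x (.add y z)) c := by
  have hxy := hx.graft (hy.graft (.zero (brkt (x.base * y.base))))
  have hyz := hy.graft (hz.graft (.zero (brkt (y.base * z.base))))
  refine ⟨x.graft (y.graft (z.graft (.zero (brkt (brkt (x.base * y.base * z.base)))))), ?_, ?_⟩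
  · calc CNEqRed (.add (.add x y) z)
          (.add (x.graft (y.graft (.zero (brkt (x.base * y.base))))) z) :=
          .add_congr (.add_isCon hx hy) (.refl z)
      CNEqRed _ _ := by
        simpa only [hx.graft_graft, hy.graft_graft, hx.base_graft, hy.base_graft, CN.base,
          CN.graft, brkt_mul] using CNEqRed.add_isCon_brkt_right hxy hz
  · calc CNEqRed (.add x (.add y z))
          (.add x (y.graft (z.graft (.zero (brkt (y.base * z.base)))))) :=
          .add_congr (.refl x) (.add_isCon hy hz)
      CNEqRed _ _ := by
        simpa only [hy.graft_graft, hz.graft_graft, hy.base_graft, hz.base_graft, CN.base,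
          CN.graft, brkt_mul, mul_assoc] using CNEqRed.add_isCon_brkt_left hx hyz
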